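/- arXiv:cs/0611004 — 3 statements merged into one kernel-verified Lean document; each statement's English description precedes it below -/
import Mathlib

section
/- Let C be a category, F : Cᵒᵖ × C ⥤ C a bifunctor, and assume that for every object X of C a chosen initial algebra (W X, in_X : F(X, W X) ⟶ W X) of the endofunctor F(X, −) is given. Then for every morphism f : X' ⟶ X of C there is a unique morphism W f : W X ⟶ W X' satisfying W f ∘ in_X = in_{X'} ∘ F(f, W f), and this assignment preserves identities and composition, so that X ↦ W X, f ↦ W f defines a functor Cᵒᵖ ⥤ C. -/
open CategoryTheory

universe v u

/-- The object part of a bifunctor `F : Cᵒᵖ × C ⥤ C`, contravariant in its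
first and covariant in its second argument: `Fobj F B A = F(B, A)`. -/
def Fobj {C : Type u} [Category.{v} C] (F : Cᵒᵖ × C ⥤ C) (B A : C) : C :=
  F.obj (Opposite.op B, A)

/-- The morphism part of a bifunctor `F : Cᵒᵖ × C ⥤ C`: for `h' : B₁ ⟶ B₀`
and `h : A₀ ⟶ A₁`, `Fmap F h' h = F(h', h) : F(B₀, A₀) ⟶ F(B₁, A₁)`. -/
def Fmap {C : Type u} [Category.{v} C] (F : Cᵒᵖ × C ⥤ C) {B₀ B₁ A₀ A₁ : C}
    (h' : B₁ ⟶ B₀) (h : A₀ ⟶ A₁) : Fobj F B₀ A₀ ⟶ Fobj F B₁ A₁ :=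
  F.map (h'.op, h)

/-- `(WX, a)` is an initial algebra for the endofunctor `F(X, −)`: for every
algebra `(Y, b)` there is a unique `k : WX ⟶ Y` with `k ∘ a = b ∘ F(X, k)`
(i.e. `F(𝟙_X, k)`). -/
def IsInitialAlgebraAt {C : Type u} [Category.{v} C] (F : Cᵒᵖ × C ⥤ C)
    (X WX : C) (a : Fobj F X WX ⟶ WX) : Prop :=
  ∀ (Y : C) (b : Fobj F X Y ⟶ Y), ∃! k : WX ⟶ Y, a ≫ k = Fmap F (𝟙 X) k ≫ b

lemma Fmap_fuse {C : Type u} [Category.{v} C] (F : Cᵒᵖ × C ⥤ C)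
    {B₀ B₁ B₂ A₀ A₁ A₂ : C} (g : B₁ ⟶ B₀) (f : B₂ ⟶ B₁)
    (k : A₀ ⟶ A₁) (l : A₁ ⟶ A₂) :
    Fmap F g k ≫ Fmap F f l = Fmap F (f ≫ g) (k ≫ l) := by
  simp [Fmap, ← F.map_comp, prod_comp]
  exact (F.map_comp (X := (Opposite.op B₀, A₀)) (Y := (Opposite.op B₁, A₁))
    (Z := (Opposite.op B₂, A₂)) (g.op, k) (f.op, l)).symm

lemma Fmap_split {C : Type u} [Category.{v} C] (F : Cᵒᵖ × C ⥤ C)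
    {B₀ B₁ A₀ A₁ : C} (f : B₁ ⟶ B₀) (k : A₀ ⟶ A₁) :
    Fmap F f k = Fmap F (𝟙 B₀) k ≫ Fmap F f (𝟙 A₁) := by
  rw [Fmap_fuse]; simp

/-- If for every object `X` a chosen initial algebra
`(W X, in_X : F(X, W X) ⟶ W X)` of `F(X, −)` is given, then for every
`f : X' ⟶ X` there is a unique `W f : W X ⟶ W X'` satisfying
`W f ∘ in_X = in_{X'} ∘ F(f, W f)`, and any such assignment preserves
identities and composition, so that `X ↦ W X`, `f ↦ W f` defines a functor
`Cᵒᵖ ⥤ C`. -/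
theorem initial_algebras_functorial {C : Type u} [Category.{v} C]
    (F : Cᵒᵖ × C ⥤ C) (W : C → C) (inn : ∀ X : C, Fobj F X (W X) ⟶ W X)
    (hinit : ∀ X : C, IsInitialAlgebraAt F X (W X) (inn X)) :
    (∀ {X' X : C} (f : X' ⟶ X),
        ∃! k : W X ⟶ W X', inn X ≫ k = Fmap F f k ≫ inn X') ∧
    ∀ Wmap : ∀ ⦃X' X : C⦄, (X' ⟶ X) → (W X ⟶ W X'),
      (∀ {X' X : C} (f : X' ⟶ X), inn X ≫ Wmap f = Fmap F f (Wmap f) ≫ inn X') →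
      (∀ X : C, Wmap (𝟙 X) = 𝟙 (W X)) ∧
      (∀ {X'' X' X : C} (f : X'' ⟶ X') (g : X' ⟶ X),
        Wmap (f ≫ g) = Wmap g ≫ Wmap f) := by
  have key : ∀ {X' X : C} (f : X' ⟶ X),
      ∃! k : W X ⟶ W X', inn X ≫ k = Fmap F f k ≫ inn X' := by
    intro X' X f
    obtain ⟨k, hk, huniq⟩ := hinit X (W X') (Fmap F f (𝟙 (W X')) ≫ inn X')
    refine ⟨k, ?_, ?_⟩
    · show inn X ≫ k = Fmap F f k ≫ inn X'
      rw [hk, ← Category.assoc, Fmap_fuse]; simp [Fmap_split F f k]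
    · intro y hy
      apply huniq
      show inn X ≫ y = Fmap F (𝟙 X) y ≫ Fmap F f (𝟙 (W X')) ≫ inn X'
      rw [hy, ← Category.assoc, Fmap_fuse]; simp [Fmap_split F f y]
  refine ⟨key, fun Wmap hW => ⟨?_, ?_⟩⟩
  · intro X
    obtain ⟨k, hk, huniq⟩ := key (𝟙 X)
    have h1 : Wmap (𝟙 X) = k := huniq _ (hW (𝟙 X))
    have h2 : 𝟙 (W X) = k := by
      apply huniq
      show inn X ≫ 𝟙 (W X) = Fmap F (𝟙 X) (𝟙 (W X)) ≫ inn X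
      rw [show Fmap F (𝟙 X) (𝟙 (W X)) = 𝟙 _ from F.map_id _]; simp
    rw [h1, ← h2]
  · intro X'' X' X f g
    obtain ⟨k, hk, huniq⟩ := key (f ≫ g)
    have h1 : Wmap (f ≫ g) = k := huniq _ (hW (f ≫ g))
    have h2 : Wmap g ≫ Wmap f = k := by
      apply huniq
      show inn X ≫ Wmap g ≫ Wmap f = Fmap F (f ≫ g) (Wmap g ≫ Wmap f) ≫ inn X''
      rw [← Category.assoc, hW g, Category.assoc, hW f, ← Category.assoc,
        Fmap_fuse]
    rw [h1, ← h2]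
end

section
/- Let F : C ⥤ C be an endofunctor of a category C with an initial algebra a : F A ⟶ A and a final coalgebra z : Z ⟶ F Z. If h : Z ⟶ A satisfies h = a ∘ F h ∘ z, then h is an isomorphism; moreover its inverse is the unique coalgebra morphism k : (A, a⁻¹) ⟶ (Z, z), where a is invertible by Lambek's lemma. -/
open CategoryTheory

universe v u

/-- `(A, a)` is an initial algebra for the endofunctor `G`: for every algebra
`(Y, b)` there is a unique `k : A ⟶ Y` with `k ∘ a = b ∘ G k`. -/
def IsInitialAlgebra {C : Type u} [Category.{v} C] (G : C ⥤ C)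
    (A : C) (a : G.obj A ⟶ A) : Prop :=
  ∀ (Y : C) (b : G.obj Y ⟶ Y), ∃! k : A ⟶ Y, a ≫ k = G.map k ≫ b

/-- `(Z, z)` is a final coalgebra for the endofunctor `G`: for every coalgebra
`(Y, d)` there is a unique `k : Y ⟶ Z` with `z ∘ k = G k ∘ d`. -/
def IsFinalCoalgebra {C : Type u} [Category.{v} C] (G : C ⥤ C)
    (Z : C) (z : Z ⟶ G.obj Z) : Prop :=
  ∀ (Y : C) (d : Y ⟶ G.obj Y), ∃! k : Y ⟶ Z, k ≫ z = d ≫ G.map k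

/-!
By Lambek's lemma `a` and `z` are invertible, and `h = a ∘ G h ∘ z` then says that `h` is both an
algebra morphism `(Z, z⁻¹) ⟶ (A, a)` and a coalgebra morphism `(Z, z) ⟶ (A, a⁻¹)`. A coalgebra
morphism `k : (A, a⁻¹) ⟶ (Z, z)` is likewise an algebra morphism `(A, a) ⟶ (Z, z⁻¹)`. So `k ≫ h`
is an algebra endomorphism of the initial algebra and `h ≫ k` a coalgebra endomorphism of the final
coalgebra, and both are identities.
-/

namespace IsInitialAlgebra

variable {C : Type u} [Category.{v} C] {G : C ⥤ C} {A : C} {a : G.obj A ⟶ A}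

noncomputable def isInitial (hA : IsInitialAlgebra G A a) :
    Limits.IsInitial (Endofunctor.Algebra.mk A a) :=
  Limits.IsInitial.ofUniqueHom
    (fun Y => ⟨(hA Y.a Y.str).choose, (hA Y.a Y.str).choose_spec.1.symm⟩)
    (fun Y m => Endofunctor.Algebra.Hom.ext ((hA Y.a Y.str).choose_spec.2 m.f m.h.symm))

theorem isIso (hA : IsInitialAlgebra G A a) : IsIso a :=
  Endofunctor.Algebra.Initial.str_isIso hA.isInitial

theorem eq_id (hA : IsInitialAlgebra G A a) {f : A ⟶ A} (hf : a ≫ f = G.map f ≫ a) :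
    f = 𝟙 A :=
  (hA A a).unique hf (by simp)

end IsInitialAlgebra

namespace IsFinalCoalgebra

variable {C : Type u} [Category.{v} C] {G : C ⥤ C} {Z : C} {z : Z ⟶ G.obj Z}

noncomputable def isTerminal (hZ : IsFinalCoalgebra G Z z) :
    Limits.IsTerminal (Endofunctor.Coalgebra.mk Z z) :=
  Limits.IsTerminal.ofUniqueHom
    (fun Y => ⟨(hZ Y.V Y.str).choose, (hZ Y.V Y.str).choose_spec.1.symm⟩)
    (fun Y m => Endofunctor.Coalgebra.Hom.ext ((hZ Y.V Y.str).choose_spec.2 m.f m.h.symm))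

theorem isIso (hZ : IsFinalCoalgebra G Z z) : IsIso z :=
  Endofunctor.Coalgebra.Terminal.str_isIso hZ.isTerminal

theorem eq_id (hZ : IsFinalCoalgebra G Z z) {f : Z ⟶ Z} (hf : f ≫ z = z ≫ G.map f) :
    f = 𝟙 Z :=
  (hZ Z z).unique hf (by simp)

end IsFinalCoalgebra

theorem hom_inv_id_and_inv_hom_id_of_eq_comp_map_comp {C : Type u} [Category.{v} C]
    {G : C ⥤ C} {A : C} {a : G.obj A ⟶ A} [IsIso a] (hA : IsInitialAlgebra G A a)
    {Z : C} {z : Z ⟶ G.obj Z} [IsIso z] (hZ : IsFinalCoalgebra G Z z)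
    {h : Z ⟶ A} (hh : h = z ≫ G.map h ≫ a) {k : A ⟶ Z} (hk : k ≫ z = inv a ≫ G.map k) :
    h ≫ k = 𝟙 Z ∧ k ≫ h = 𝟙 A := by
  have h_alg : inv z ≫ h = G.map h ≫ a := (IsIso.inv_comp_eq z).2 hh
  have h_coalg : h ≫ inv a = z ≫ G.map h :=
    (IsIso.comp_inv_eq a).2 (hh.trans (Category.assoc _ _ _).symm)
  have k_alg : a ≫ k = G.map k ≫ inv z := by
    rw [IsIso.eq_comp_inv, Category.assoc, hk, IsIso.hom_inv_id_assoc]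
  constructor
  · refine hZ.eq_id ?_
    rw [Category.assoc, hk, reassoc_of% h_coalg, G.map_comp]
  · refine hA.eq_id ?_
    rw [reassoc_of% k_alg, h_alg, G.map_comp, Category.assoc]

/-- Let `a : G A ⟶ A` be an initial algebra and `z : Z ⟶ G Z` a final
coalgebra for an endofunctor `G`. If `h : Z ⟶ A` satisfies
`h = a ∘ G h ∘ z`, then `h` is an isomorphism, and its inverse is the unique
coalgebra morphism `k : (A, a⁻¹) ⟶ (Z, z)` (where `a⁻¹` is any inverse of
`a`; `a` is invertible by Lambek's lemma). -/
theorem fixpoint_coalgebra_to_algebra_iso {C : Type u} [Category.{v} C]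
    (G : C ⥤ C) (A : C) (a : G.obj A ⟶ A) (hA : IsInitialAlgebra G A a)
    (Z : C) (z : Z ⟶ G.obj Z) (hZ : IsFinalCoalgebra G Z z)
    (h : Z ⟶ A) (hh : h = z ≫ G.map h ≫ a) :
    IsIso h ∧
      ∀ a' : A ⟶ G.obj A, a ≫ a' = 𝟙 (G.obj A) → a' ≫ a = 𝟙 A →
        ∀ k : A ⟶ Z, k ≫ z = a' ≫ G.map k →
          h ≫ k = 𝟙 Z ∧ k ≫ h = 𝟙 A := by
  have := hA.isIso
  have := hZ.isIso
  obtain ⟨k₀, hk₀, -⟩ := hZ A (inv a)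
  refine ⟨⟨k₀, hom_inv_id_and_inv_hom_id_of_eq_comp_map_comp hA hZ hh hk₀⟩, ?_⟩
  intro a' haa' _ k hk
  obtain rfl : a' = inv a := IsIso.eq_inv_of_hom_inv_id haa'
  exact hom_inv_id_and_inv_hom_id_of_eq_comp_map_comp hA hZ hh hk
end

section
/- Let F : C ⥤ C be an endofunctor of a category C with an initial algebra a : F A ⟶ A and a final coalgebra z : Z ⟶ F Z, and suppose there exists a morphism h : Z ⟶ A with h = a ∘ F h ∘ z. Then the coalgebra (A, a⁻¹) is a final coalgebra for F and the algebra (Z, z⁻¹) is an initial algebra for F (a and z are invertible by Lambek's lemma and its dual); in particular the initial algebra and the final coalgebra coincide up to isomorphism. -/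
open CategoryTheory

universe v u

/-!
By Lambek's lemma `a` and `z` are invertible, so `h` is at once an algebra morphism
`(Z, z⁻¹) ⟶ (A, a)` and a coalgebra morphism `(Z, z) ⟶ (A, a⁻¹)`. The unique algebra morphism
`g : (A, a) ⟶ (Z, z⁻¹)` is likewise a coalgebra morphism `(A, a⁻¹) ⟶ (Z, z)`, so initiality
forces `g ≫ h = 𝟙` and finality forces `h ≫ g = 𝟙`. Initiality and finality then transfer along
the isomorphism `h`.
-/

namespace IsInitialAlgebra

variable {C : Type u} [Category.{v} C] {G : C ⥤ C} {A : C} {a : G.obj A ⟶ A}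

theorem iff_nonempty_isInitial :
    IsInitialAlgebra G A a ↔ Nonempty (Limits.IsInitial (Endofunctor.Algebra.mk A a)) := by
  constructor
  · intro hA
    choose k hk huniq using fun Y : Endofunctor.Algebra G => hA Y.a Y.str
    exact ⟨.ofUniqueHom (fun Y => ⟨k Y, (hk Y).symm⟩)
      fun Y m => Endofunctor.Algebra.Hom.ext (huniq Y m.f m.h.symm)⟩
  · rintro ⟨hI⟩ Y b
    refine ⟨(hI.to ⟨Y, b⟩).f, (hI.to ⟨Y, b⟩).h.symm, fun k hk => ?_⟩
    exact congrArg Endofunctor.Algebra.Hom.f (hI.hom_ext ⟨k, hk.symm⟩ (hI.to ⟨Y, b⟩))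

theorem of_isIso (hA : IsInitialAlgebra G A a) {B : C} {b : G.obj B ⟶ B} (f : B ⟶ A) [IsIso f]
    (hf : b ≫ f = G.map f ≫ a) : IsInitialAlgebra G B b :=
  iff_nonempty_isInitial.2
    ⟨(iff_nonempty_isInitial.1 hA).some.ofIso (Endofunctor.Algebra.isoMk (asIso f) hf.symm).symm⟩

end IsInitialAlgebra

namespace IsFinalCoalgebra

variable {C : Type u} [Category.{v} C] {G : C ⥤ C} {Z : C} {z : Z ⟶ G.obj Z}

theorem iff_nonempty_isTerminal :
    IsFinalCoalgebra G Z z ↔ Nonempty (Limits.IsTerminal (Endofunctor.Coalgebra.mk Z z)) := by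
  constructor
  · intro hZ
    choose k hk huniq using fun Y : Endofunctor.Coalgebra G => hZ Y.V Y.str
    exact ⟨.ofUniqueHom (fun Y => ⟨k Y, (hk Y).symm⟩)
      fun Y m => Endofunctor.Coalgebra.Hom.ext (huniq Y m.f m.h.symm)⟩
  · rintro ⟨hT⟩ Y d
    refine ⟨(hT.from ⟨Y, d⟩).f, (hT.from ⟨Y, d⟩).h.symm, fun k hk => ?_⟩
    exact congrArg Endofunctor.Coalgebra.Hom.f (hT.hom_ext ⟨k, hk.symm⟩ (hT.from ⟨Y, d⟩))

theorem of_isIso (hZ : IsFinalCoalgebra G Z z) {B : C} {b : B ⟶ G.obj B} (f : Z ⟶ B) [IsIso f]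
    (hf : f ≫ b = z ≫ G.map f) : IsFinalCoalgebra G B b :=
  iff_nonempty_isTerminal.2
    ⟨(iff_nonempty_isTerminal.1 hZ).some.ofIso (Endofunctor.Coalgebra.isoMk (asIso f) hf.symm)⟩

end IsFinalCoalgebra

theorem isIso_of_isInitialAlgebra_of_isFinalCoalgebra {C : Type u} [Category.{v} C] {G : C ⥤ C}
    {A : C} {a : G.obj A ⟶ A} [IsIso a] (hA : IsInitialAlgebra G A a)
    {Z : C} {z : Z ⟶ G.obj Z} [IsIso z] (hZ : IsFinalCoalgebra G Z z)
    {h : Z ⟶ A} (h_alg : inv z ≫ h = G.map h ≫ a) (h_coalg : h ≫ inv a = z ≫ G.map h) :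
    IsIso h := by
  obtain ⟨g, g_alg, -⟩ := hA Z (inv z)
  have g_coalg : g ≫ z = inv a ≫ G.map g := by
    rw [IsIso.eq_inv_comp, reassoc_of% g_alg, IsIso.inv_hom_id, Category.comp_id]
  refine ⟨g, (hZ Z z).unique ?_ (by simp), (hA A a).unique ?_ (by simp)⟩
  · rw [Category.assoc, g_coalg, reassoc_of% h_coalg, G.map_comp]
  · rw [reassoc_of% g_alg, h_alg, G.map_comp, Category.assoc]

/-- **Algebraic compactness.** Let `a : G A ⟶ A` be an initial algebra and
`z : Z ⟶ G Z` a final coalgebra for an endofunctor `G`, and suppose there is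
a morphism `h : Z ⟶ A` with `h = a ∘ G h ∘ z`. Then the coalgebra
`(A, a⁻¹)` is a final coalgebra and the algebra `(Z, z⁻¹)` is an initial
algebra (where `a` and `z` are invertible by Lambek's lemma and its dual);
in particular the initial algebra and the final coalgebra coincide up to
isomorphism. -/
theorem algebraic_compactness {C : Type u} [Category.{v} C]
    (G : C ⥤ C) (A : C) (a : G.obj A ⟶ A) (hA : IsInitialAlgebra G A a)
    (Z : C) (z : Z ⟶ G.obj Z) (hZ : IsFinalCoalgebra G Z z)
    (hex : ∃ h : Z ⟶ A, h = z ≫ G.map h ≫ a) :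
    (∃ a' : A ⟶ G.obj A,
        a ≫ a' = 𝟙 (G.obj A) ∧ a' ≫ a = 𝟙 A ∧ IsFinalCoalgebra G A a') ∧
    (∃ z' : G.obj Z ⟶ Z,
        z ≫ z' = 𝟙 Z ∧ z' ≫ z = 𝟙 (G.obj Z) ∧ IsInitialAlgebra G Z z') ∧
    Nonempty (A ≅ Z) := by
  obtain ⟨h, hh⟩ := hex
  have := hA.isIso
  have := hZ.isIso
  have h_alg : inv z ≫ h = G.map h ≫ a := by rw [IsIso.inv_comp_eq, ← hh]
  have h_coalg : h ≫ inv a = z ≫ G.map h := by rw [IsIso.comp_inv_eq, Category.assoc, ← hh]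
  have := isIso_of_isInitialAlgebra_of_isFinalCoalgebra hA hZ h_alg h_coalg
  exact ⟨⟨inv a, by simp, by simp, hZ.of_isIso h h_coalg⟩,
    ⟨inv z, by simp, by simp, hA.of_isIso h h_alg⟩, ⟨(asIso h).symm⟩⟩
end
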